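/- Let R be a von Neumann regular ring. Then the following conditions are equivalent: (1) R is Armendariz; (2) R is reduced; (3) R is central linear Armendariz; (4) R is linear Armendariz; (5) R is semicommutative. -/

import Mathlib

/-!
Reduced rings are Armendariz by a double induction on coefficient indices, and semicommutative
because `(a r b)² = a r (b a) r b` with `b a = 0` whenever `a b = 0`; Armendariz trivially implies
linear Armendariz, which trivially implies central linear Armendariz. Regularity is used only to
get back to reducedness. If `a² = 0` and `a = a x a`, then semicommutativity gives `a = a x a = 0`
at once. In a central linear Armendariz ring every idempotent `e` is central: for
`u = e r (1 - e)` the product `(e + u X)(1 - e - u X)` vanishes, so `-u = e (-u)` is central and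
`u = e u = u e = 0`; symmetrically `(1 - e) r e = 0`, so `e r = e r e = r e`. Applied to the
idempotent `a x`, this gives `a = a (a x) = a² x = 0`.
-/

open Polynomial

/-- A ring `R` is *central linear Armendariz* if whenever the product of two linear
polynomials `(a₀ + a₁x)(b₀ + b₁x) = 0` in `R[x]`, each product `aᵢbⱼ` is central in `R`. -/
def CentralLinearArmendariz (R : Type*) [Ring R] : Prop :=
  ∀ a₀ a₁ b₀ b₁ : R,
    (C a₀ + C a₁ * X) * (C b₀ + C b₁ * X) = 0 →
      a₀ * b₀ ∈ Set.center R ∧ a₀ * b₁ ∈ Set.center R ∧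
      a₁ * b₀ ∈ Set.center R ∧ a₁ * b₁ ∈ Set.center R

/-- A ring `R` is *linear Armendariz* if whenever the product of two linear
polynomials `(a₀ + a₁x)(b₀ + b₁x) = 0` in `R[x]`, each product `aᵢbⱼ` is zero. -/
def LinearArmendariz (R : Type*) [Ring R] : Prop :=
  ∀ a₀ a₁ b₀ b₁ : R,
    (C a₀ + C a₁ * X) * (C b₀ + C b₁ * X) = 0 →
      a₀ * b₀ = 0 ∧ a₀ * b₁ = 0 ∧ a₁ * b₀ = 0 ∧ a₁ * b₁ = 0

/-- A ring `R` is *Armendariz* if whenever `f g : R[x]` satisfy `f * g = 0`,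
every product of a coefficient of `f` with a coefficient of `g` is zero. -/
def Armendariz (R : Type*) [Ring R] : Prop :=
  ∀ f g : R[X], f * g = 0 → ∀ i j : ℕ, f.coeff i * g.coeff j = 0

def IsVonNeumannRegular (R : Type*) [Ring R] : Prop :=
  ∀ a : R, ∃ x : R, a = a * x * a

section

variable {R : Type*} [Ring R]

theorem Polynomial.linear_mul_linear (a₀ a₁ b₀ b₁ : R) :
    (C a₀ + C a₁ * X) * (C b₀ + C b₁ * X) =
      C (a₀ * b₀) + C (a₀ * b₁ + a₁ * b₀) * X + C (a₁ * b₁) * X ^ 2 := by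
  simp only [add_mul, mul_add, C_add, ← mul_assoc, ← C_mul, mul_assoc _ X (C _), X_mul_C, sq]
  abel

section Reduced

variable [IsReduced R] {a b : R}

theorem IsReduced.mul_eq_zero_symm (h : a * b = 0) : b * a = 0 :=
  eq_zero_of_pow_eq_zero (n := 2) <| by
    rw [sq, mul_assoc, ← mul_assoc a, h, zero_mul, mul_zero]

theorem IsReduced.mul_mul_eq_zero (h : a * b = 0) (r : R) : a * r * b = 0 :=
  eq_zero_of_pow_eq_zero (n := 2) <| by
    rw [sq, show a * r * b * (a * r * b) = a * r * (b * a) * (r * b) by noncomm_ring,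
      IsReduced.mul_eq_zero_symm h, mul_zero, zero_mul]

theorem IsReduced.mul_eq_zero_of_mul_mul_self (h : a * (b * b) = 0) : a * b = 0 :=
  have hb : b * (a * b) = 0 := IsReduced.mul_eq_zero_symm (by rwa [mul_assoc])
  eq_zero_of_pow_eq_zero (n := 2) <| by rw [sq, mul_assoc, hb, mul_zero]

open Finset.HasAntidiagonal in
theorem IsReduced.armendariz : Armendariz R := by
  intro f g hfg i j
  induction hn : i + j using Nat.strong_induction_on generalizing i j with
  | _ n ihn =>
  induction j using Nat.strong_induction_on generalizing i with
  | _ j ihj =>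
  -- In `(∑ p + q = n, f_p g_q) g_j = 0` the terms with `q < j` vanish by the inner hypothesis,
  -- those with `q > j` because `f_p g_j = 0` by the outer one, leaving `f_i g_j g_j = 0`.
  have hsum : ∑ p ∈ antidiagonal n, f.coeff p.1 * g.coeff p.2 * g.coeff j = 0 := by
    rw [← Finset.sum_mul, ← coeff_mul, hfg, coeff_zero, zero_mul]
  rw [Finset.sum_eq_single_of_mem (i, j) (mem_antidiagonal.2 hn)] at hsum
  · exact IsReduced.mul_eq_zero_of_mul_mul_self (by rwa [mul_assoc] at hsum)
  rintro ⟨p, q⟩ hpq hne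
  simp only [mem_antidiagonal] at hpq ⊢
  rcases lt_trichotomy q j with hlt | rfl | hgt
  · rw [ihj q hlt p (by omega), zero_mul]
  · exact absurd (by rw [Prod.mk.injEq]; omega) hne
  · exact IsReduced.mul_mul_eq_zero (ihn (p + j) (by omega) p j rfl) _

end Reduced

theorem Armendariz.linearArmendariz (h : Armendariz R) : LinearArmendariz R :=
  fun a₀ a₁ b₀ b₁ hab ↦
    ⟨by simpa using h _ _ hab 0 0, by simpa using h _ _ hab 0 1,
      by simpa using h _ _ hab 1 0, by simpa using h _ _ hab 1 1⟩

theorem LinearArmendariz.centralLinearArmendariz (h : LinearArmendariz R) :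
    CentralLinearArmendariz R := fun a₀ a₁ b₀ b₁ hab ↦ by
  obtain ⟨h₀₀, h₀₁, h₁₀, h₁₁⟩ := h a₀ a₁ b₀ b₁ hab
  simp only [h₀₀, h₀₁, h₁₀, h₁₁, Set.zero_mem_center, and_self]

theorem CentralLinearArmendariz.mul_mul_one_sub_eq_zero (h : CentralLinearArmendariz R) {e : R}
    (he : IsIdempotentElem e) (r : R) : e * r * (1 - e) = 0 := by
  set u := e * r * (1 - e) with hu
  have heu : e * u = u := by rw [hu, ← mul_assoc, ← mul_assoc, he.eq]
  have hue : u * (1 - e) = u := by rw [hu, mul_assoc _ (1 - e), he.one_sub.eq]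
  have huu : u * u = 0 := by
    rw [hu, show e * r * (1 - e) * (e * r * (1 - e)) = e * r * ((1 - e) * e) * (r * (1 - e)) by
      noncomm_ring, he.one_sub_mul_self, mul_zero, zero_mul]
  have hprod : (C e + C u * X) * (C (1 - e) + C (-u) * X) = 0 := by
    rw [linear_mul_linear, he.mul_one_sub_self, mul_neg, mul_neg, heu, hue, huu,
      neg_add_cancel, neg_zero]
    simp
  obtain ⟨-, hneg, -, -⟩ := h _ _ _ _ hprod
  rw [mul_neg, heu] at hneg
  have hcen : u ∈ Set.center R := neg_neg u ▸ Set.neg_mem_center hneg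
  calc u = e * u := heu.symm
    _ = u * e := Semigroup.mem_center_iff.1 hcen e
    _ = 0 := by rw [hu, mul_assoc _ (1 - e), he.one_sub_mul_self, mul_zero]

theorem CentralLinearArmendariz.mem_center_of_isIdempotentElem (h : CentralLinearArmendariz R)
    {e : R} (he : IsIdempotentElem e) : e ∈ Set.center R := by
  refine Semigroup.mem_center_iff.2 fun r ↦ ?_
  have h₁ := h.mul_mul_one_sub_eq_zero he r
  have h₂ := h.mul_mul_one_sub_eq_zero he.one_sub r
  rw [sub_sub_cancel, sub_mul, one_mul, sub_mul, sub_eq_zero] at h₂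
  rw [mul_sub, mul_one, sub_eq_zero] at h₁
  rw [h₁, h₂]

namespace IsVonNeumannRegular

theorem isReduced_of_semicommutative (hR : IsVonNeumannRegular R)
    (h : ∀ a b : R, a * b = 0 → ∀ r : R, a * r * b = 0) : IsReduced R :=
  (isReduced_iff_pow_one_lt 2 one_lt_two).2 fun a ha ↦ by
    obtain ⟨x, hx⟩ := hR a
    exact hx.trans (h a a (sq a ▸ ha) x)

theorem isReduced_of_idempotents_mem_center (hR : IsVonNeumannRegular R)
    (h : ∀ e : R, IsIdempotentElem e → e ∈ Set.center R) : IsReduced R :=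
  (isReduced_iff_pow_one_lt 2 one_lt_two).2 fun a ha ↦ by
    obtain ⟨x, hx⟩ := hR a
    have hidem : IsIdempotentElem (a * x) := by
      rw [IsIdempotentElem, ← mul_assoc, ← hx]
    calc a = a * x * a := hx
      _ = a * (a * x) := (Semigroup.mem_center_iff.1 (h _ hidem) a).symm
      _ = 0 := by rw [← mul_assoc, ← sq, ha, zero_mul]

end IsVonNeumannRegular

end

/-- For a von Neumann regular ring `R`, the conditions Armendariz, reduced,
central linear Armendariz, linear Armendariz and semicommutative are all equivalent. -/
theorem stmt_3 (R : Type*) [Ring R] (hvnr : ∀ a : R, ∃ x : R, a = a * x * a) :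
    [Armendariz R,
     IsReduced R,
     CentralLinearArmendariz R,
     LinearArmendariz R,
     ∀ a b : R, a * b = 0 → ∀ r : R, a * r * b = 0].TFAE := by
  have hR : IsVonNeumannRegular R := hvnr
  tfae_have 1 → 4 := Armendariz.linearArmendariz
  tfae_have 4 → 3 := LinearArmendariz.centralLinearArmendariz
  tfae_have 3 → 2 := fun h ↦
    hR.isReduced_of_idempotents_mem_center fun _ ↦ h.mem_center_of_isIdempotentElem
  tfae_have 2 → 1 := fun _ ↦ IsReduced.armendariz
  tfae_have 2 → 5 := fun _ _ _ ↦ IsReduced.mul_mul_eq_zero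
  tfae_have 5 → 2 := hR.isReduced_of_semicommutative
  tfae_finish
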